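/- arXiv:2210.00303 — 3 statements merged into one kernel-verified Lean document; each statement's English description precedes it below -/
import Mathlib

section
/- The kernel of Ψ is {±I₂}: for A ∈ SL₂(ℝ), Ψ(A) = I₃ if and only if A = I₂ or A = −I₂. -/
/-!
Every entry of `Ψ(A)` is a quadratic form in the entries `a, b, c, d` of `A`, so `Ψ(-A) = Ψ(A)`
and both `±I₂` lie in the kernel. Conversely, if `Ψ(A) = I₃` then the difference of the two
outer diagonal entries gives `b² + c² = 0`, so `A` is diagonal; the middle diagonal entry and the
corner entry then give `ad = 1` and `a² + d² = 2`, whence `(a - d)² = 0` and `a = d = ±1`.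
-/

open Matrix

noncomputable section

/-- The space of 3×3 real matrices. -/
abbrev M3 := Matrix (Fin 3) (Fin 3) ℝ

/-- The matrix `J = diag(1, 1, −1)`. -/
def Jmat : M3 := Matrix.diagonal ![1, 1, -1]

/-- The group `SL(2, ℝ)`. -/
abbrev SL2R := Matrix.SpecialLinearGroup (Fin 2) ℝ

/-- The map `Ψ : SL(2,ℝ) → M₃(ℝ)`. -/
def Psi (A : SL2R) : M3 :=
  let a := (A : Matrix (Fin 2) (Fin 2) ℝ) 0 0
  let b := (A : Matrix (Fin 2) (Fin 2) ℝ) 0 1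
  let c := (A : Matrix (Fin 2) (Fin 2) ℝ) 1 0
  let d := (A : Matrix (Fin 2) (Fin 2) ℝ) 1 1
  !![(a^2 - b^2 - c^2 + d^2)/2, a*b - c*d, (a^2 + b^2 - c^2 - d^2)/2;
     a*c - b*d,                 a*d + b*c, a*c + b*d;
     (a^2 - b^2 + c^2 - d^2)/2, a*b + c*d, (a^2 + b^2 + c^2 + d^2)/2]

theorem Psi_one : Psi 1 = 1 := by
  ext i j
  fin_cases i <;> fin_cases j <;> norm_num [Psi]

theorem Psi_neg (A : SL2R) : Psi (-A) = Psi A := by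
  simp only [Psi, SpecialLinearGroup.coe_neg, Matrix.neg_apply]
  ring_nf

theorem eq_zero_and_eq_pm_one_of_Psi_diag {a b c d : ℝ}
    (h₀ : (a^2 - b^2 - c^2 + d^2)/2 = 1) (h₁ : a*d + b*c = 1)
    (h₂ : (a^2 + b^2 + c^2 + d^2)/2 = 1) :
    b = 0 ∧ c = 0 ∧ d = a ∧ (a = 1 ∨ a = -1) := by
  have hbc : b^2 + c^2 = 0 := by linarith
  have hb : b = 0 := by nlinarith [sq_nonneg b, sq_nonneg c]
  have hc : c = 0 := by nlinarith [sq_nonneg b, sq_nonneg c]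
  subst hb hc
  have hd : d = a := by nlinarith [sq_nonneg (a - d)]
  subst hd
  exact ⟨rfl, rfl, rfl, mul_self_eq_one_iff.mp (by simpa using h₁)⟩

/-- The kernel of `Ψ` is `{±I₂}`: for `A ∈ SL₂(ℝ)`, `Ψ(A) = I₃` if and only if
`A = I₂` or `A = −I₂`. -/
theorem Psi_ker_eq_pm_one :
    ∀ A : SL2R, Psi A = 1 ↔
      ((A : Matrix (Fin 2) (Fin 2) ℝ) = 1 ∨ (A : Matrix (Fin 2) (Fin 2) ℝ) = -1) := by
  intro A
  constructor
  · intro h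
    have entry (i j : Fin 3) : Psi A i j = (1 : M3) i j := by rw [h]
    obtain ⟨hb, hc, hd, ha⟩ := eq_zero_and_eq_pm_one_of_Psi_diag
      (by simpa [Psi] using entry 0 0) (by simpa [Psi] using entry 1 1)
      (by simpa [Psi] using entry 2 2)
    rw [eta_fin_two (A : Matrix (Fin 2) (Fin 2) ℝ), hb, hc, hd]
    rcases ha with ha | ha <;> rw [ha]
    · exact Or.inl (one_fin_two).symm
    · exact Or.inr (by rw [one_fin_two]; simp)
  · rintro (h | h)
    · rw [show A = 1 from Subtype.ext h, Psi_one]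
    · rw [show A = -1 from Subtype.ext h, Psi_neg, Psi_one]
end
end

section
/- Let n ∈ ℤ, let μ be a left Haar measure on G = SO(2,1)°, let V be a complex Hilbert space, and let π be a group homomorphism from G into the unitary operators on V. Let f : G → ℂ satisfy f(k_{θ₁} · x · k_{θ₂}) = e^{in(θ₁+θ₂)} f(x) for all x ∈ G and all θ₁, θ₂ ∈ ℝ, and assume that for each v ∈ V the function x ↦ f(x) • (π(x)v) is Bochner integrable with respect to μ. If the only vector w ∈ V satisfying π(k_θ)w = e^{−inθ} w for all θ ∈ ℝ is w = 0, then ∫_G f(x) • (π(x)v) dμ(x) = 0 for every v ∈ V. -/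
open Matrix MeasureTheory

noncomputable section

/-- The rotation matrix `k_θ`. -/
def kmat (θ : ℝ) : M3 :=
  !![Real.cos θ, -Real.sin θ, 0; Real.sin θ, Real.cos θ, 0; 0, 0, 1]

lemma kmat_mul_neg (θ : ℝ) : kmat θ * kmat (-θ) = 1 := by
  have h1 : (1 : M3) = !![1,0,0; 0,1,0; 0,0,1] := by
    ext i j; fin_cases i <;> fin_cases j <;>
      simp [Matrix.one_apply, Matrix.vecHead, Matrix.vecTail]
  rw [h1, kmat, kmat, Matrix.mul_fin_three]
  ext i j; fin_cases i <;> fin_cases j <;>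
    simp [Real.cos_neg, Real.sin_neg, Matrix.vecHead, Matrix.vecTail] <;>
    nlinarith [Real.sin_sq_add_cos_sq θ]

/-- The rotation `k_θ` as an element of `GL(3, ℝ)`. -/
def kGL (θ : ℝ) : GL (Fin 3) ℝ :=
  ⟨kmat θ, kmat (-θ), kmat_mul_neg θ, by simpa using kmat_mul_neg (-θ)⟩

lemma continuous_kmat : Continuous kmat := by
  apply continuous_matrix
  intro i j
  fin_cases i <;> fin_cases j <;>
    simp [kmat, Matrix.vecHead, Matrix.vecTail] <;> fun_prop

lemma continuous_kGL : Continuous kGL := by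
  rw [Units.continuous_iff]
  exact ⟨continuous_kmat, continuous_kmat.comp continuous_neg⟩

/-- `SO(2,1)(ℝ)`, realised as the subgroup of `GL(3, ℝ)` consisting of the matrices of
determinant `1` that preserve the quadratic form given by `J = diag(1, 1, −1)`. -/
def SO21 : Subgroup (GL (Fin 3) ℝ) where
  carrier := {g | (g : M3).det = 1 ∧ (g : M3)ᵀ * Jmat * (g : M3) = Jmat}
  one_mem' := by constructor <;> simp
  mul_mem' := by
    rintro a b ⟨ha1, ha2⟩ ⟨hb1, hb2⟩
    refine ⟨by simp [ha1, hb1], ?_⟩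
    have : ((a * b : GL (Fin 3) ℝ) : M3)ᵀ * Jmat * ((a * b : GL (Fin 3) ℝ) : M3)
        = (b : M3)ᵀ * ((a : M3)ᵀ * Jmat * (a : M3)) * (b : M3) := by
      simp only [Units.val_mul, Matrix.transpose_mul, Matrix.mul_assoc]
    rw [this, ha2, hb2]
  inv_mem' := by
    rintro g ⟨h1, h2⟩
    have hAB : (g : M3) * ((g⁻¹ : GL (Fin 3) ℝ) : M3) = 1 := by
      rw [← Units.val_mul, mul_inv_cancel, Units.val_one]
    refine ⟨by simp [Matrix.coe_units_inv, Matrix.det_nonsing_inv, h1], ?_⟩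
    calc ((g⁻¹ : GL (Fin 3) ℝ) : M3)ᵀ * Jmat * ((g⁻¹ : GL (Fin 3) ℝ) : M3)
        = ((g⁻¹ : GL (Fin 3) ℝ) : M3)ᵀ * ((g : M3)ᵀ * Jmat * (g : M3))
            * ((g⁻¹ : GL (Fin 3) ℝ) : M3) := by rw [h2]
      _ = ((g : M3) * ((g⁻¹ : GL (Fin 3) ℝ) : M3))ᵀ * Jmat
            * ((g : M3) * ((g⁻¹ : GL (Fin 3) ℝ) : M3)) := by
          simp only [Matrix.transpose_mul, Matrix.mul_assoc]
      _ = Jmat := by rw [hAB]; simp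

lemma kGL_mem (θ : ℝ) : kGL θ ∈ SO21 := by
  constructor
  · show (kmat θ).det = 1
    simp [kmat, Matrix.det_fin_three]
    nlinarith [Real.sin_sq_add_cos_sq θ]
  · show (kmat θ)ᵀ * Jmat * kmat θ = Jmat
    have hJ : Jmat = !![1,0,0; 0,1,0; 0,0,-1] := by
      ext i j; fin_cases i <;> fin_cases j <;>
        simp [Jmat, Matrix.vecHead, Matrix.vecTail]
    have hT : (kmat θ)ᵀ = !![Real.cos θ, Real.sin θ, 0; -Real.sin θ, Real.cos θ, 0; 0, 0, 1] := by
      ext i j; fin_cases i <;> fin_cases j <;> simp [kmat, Matrix.vecHead, Matrix.vecTail]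
    rw [hJ, hT, kmat, Matrix.mul_fin_three, Matrix.mul_fin_three]
    ext i j; fin_cases i <;> fin_cases j <;>
      simp [Matrix.vecHead, Matrix.vecTail] <;> nlinarith [Real.sin_sq_add_cos_sq θ]

/-- The rotation `k_θ` as an element of `SO(2,1)(ℝ)`. -/
def kS (θ : ℝ) : ↥SO21 := ⟨kGL θ, kGL_mem θ⟩

lemma continuous_kS : Continuous kS := continuous_kGL.subtype_mk _

lemma kS_zero : kS 0 = 1 := by
  apply Subtype.ext
  apply Units.ext
  show kmat 0 = 1
  ext i j; fin_cases i <;> fin_cases j <;>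
    simp [kmat, Matrix.one_apply, Matrix.vecHead, Matrix.vecTail]

lemma kS_mem_cc (θ : ℝ) : kS θ ∈ connectedComponent (1 : ↥SO21) := by
  have h : Set.range kS ⊆ connectedComponent (1 : ↥SO21) := by
    apply IsPreconnected.subset_connectedComponent
    · rw [← Set.image_univ]
      exact isPreconnected_univ.image kS continuous_kS.continuousOn
    · exact ⟨0, kS_zero⟩
  exact h ⟨θ, rfl⟩

/-- `G = SO(2,1)°`, the connected component of the identity in `SO(2,1)(ℝ)`. -/
def SO21c : Subgroup ↥SO21 := Subgroup.connectedComponentOfOne ↥SO21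

/-- The rotation `k_θ` as an element of `G = SO(2,1)°`; the maximal compact subgroup
`K` is the set of all `kG θ`, `θ ∈ ℝ`. -/
def kG (θ : ℝ) : ↥SO21c := ⟨kS θ, kS_mem_cc θ⟩

/-- The underlying 3×3 matrix of an element of `G = SO(2,1)°`. -/
def toM (g : ↥SO21c) : M3 := (((g : ↥SO21) : GL (Fin 3) ℝ) : M3)

instance : MeasurableSpace ↥SO21c := borel ↥SO21c
instance : BorelSpace ↥SO21c := ⟨rfl⟩

lemma kG_zero : kG 0 = 1 := Subtype.ext kS_zero

lemma kG_inv (θ : ℝ) : (kG θ)⁻¹ = kG (-θ) :=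
  inv_eq_of_mul_eq_one_right <| Subtype.ext <| Subtype.ext <| Units.ext <| kmat_mul_neg θ

section

variable {G 𝕜 V : Type*} [Group G] [MeasurableSpace G] [MeasurableMul G]
  {μ : Measure G} [μ.IsMulLeftInvariant] [RCLike 𝕜]
  [NormedAddCommGroup V] [NormedSpace 𝕜 V] [NormedSpace ℝ V]

theorem map_integral_smul_apply_eq_integral_translate (ρ : G →* (V →L[𝕜] V)) (f : G → 𝕜)
    (v : V) (g : G) :
    ρ g (∫ x, f x • ρ x v ∂μ) = ∫ x, f (g⁻¹ * x) • ρ x v ∂μ := by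
  -- `ρ g` is invertible, so it commutes with the Bochner integral even without integrability.
  let e : V ≃L[𝕜] V := ContinuousLinearEquiv.unitsEquiv 𝕜 V (ρ.toHomUnits g)
  calc ρ g (∫ x, f x • ρ x v ∂μ) = ∫ x, e (f x • ρ x v) ∂μ := (e.integral_comp_comm _).symm
    _ = ∫ x, f (g⁻¹ * (g * x)) • ρ (g * x) v ∂μ := by
      simp only [e, ContinuousLinearEquiv.unitsEquiv_apply, MonoidHom.coe_toHomUnits,
        inv_mul_cancel_left, map_mul, mul_apply_eq_comp, map_smul]
    _ = ∫ x, f (g⁻¹ * x) • ρ x v ∂μ := integral_mul_left_eq_self (fun x ↦ f (g⁻¹ * x) • ρ x v) g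

theorem map_integral_smul_apply_eq_smul (ρ : G →* (V →L[𝕜] V)) {f : G → 𝕜} {g : G} {c : 𝕜}
    (hf : ∀ x, f (g⁻¹ * x) = c * f x) (v : V) :
    ρ g (∫ x, f x • ρ x v ∂μ) = c • ∫ x, f x • ρ x v ∂μ := by
  simp only [map_integral_smul_apply_eq_integral_translate, hf, mul_smul, integral_smul]

end

theorem integral_bi_equivariant_eq_zero_of_no_isotypic_vector_general
    (n : ℤ) (μ : MeasureTheory.Measure ↥SO21c) [μ.IsHaarMeasure]
    (V : Type*) [NormedAddCommGroup V] [InnerProductSpace ℂ V] [CompleteSpace V]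
    (π : ↥SO21c →* unitary (V →L[ℂ] V))
    (f : ↥SO21c → ℂ)
    (hf : ∀ (x : ↥SO21c) (θ₁ θ₂ : ℝ),
      f (kG θ₁ * x * kG θ₂) = Complex.exp ((n : ℂ) * (θ₁ + θ₂) * Complex.I) * f x)
    (hw : ∀ w : V,
      (∀ θ : ℝ, (π (kG θ) : V →L[ℂ] V) w = Complex.exp (-((n : ℂ) * θ) * Complex.I) • w) →
        w = 0) :
    ∀ v : V, (∫ x : ↥SO21c, f x • ((π x : V →L[ℂ] V) v) ∂μ) = 0 := by
  intro v
  apply hw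
  intro θ
  have hf_left : ∀ x, f ((kG θ)⁻¹ * x) = Complex.exp (-((n : ℂ) * θ) * Complex.I) * f x := by
    intro x
    simpa [kG_inv, kG_zero, neg_mul] using hf x (-θ) 0
  exact map_integral_smul_apply_eq_smul ((unitary (V →L[ℂ] V)).subtype.comp π) hf_left v

/-- If `f : G → ℂ` is `τ_n × τ_n`-bi-equivariant, `π` is a unitary representation of
`G = SO(2,1)°` on a complex Hilbert space `V`, and the only vector `w ∈ V` with
`π(k_θ)w = e^{−inθ} w` for all `θ` is `w = 0`, then `∫_G f(x) • (π(x)v) dμ(x) = 0`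
for every `v ∈ V`. -/
theorem integral_bi_equivariant_eq_zero_of_no_isotypic_vector
    (n : ℤ) (μ : MeasureTheory.Measure ↥SO21c) [μ.IsHaarMeasure]
    (V : Type*) [NormedAddCommGroup V] [InnerProductSpace ℂ V] [CompleteSpace V]
    (π : ↥SO21c →* unitary (V →L[ℂ] V))
    (f : ↥SO21c → ℂ)
    (hf : ∀ (x : ↥SO21c) (θ₁ θ₂ : ℝ),
      f (kG θ₁ * x * kG θ₂) = Complex.exp ((n : ℂ) * (θ₁ + θ₂) * Complex.I) * f x)
    (hint : ∀ v : V,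
      MeasureTheory.Integrable (fun x : ↥SO21c => f x • ((π x : V →L[ℂ] V) v)) μ)
    (hw : ∀ w : V,
      (∀ θ : ℝ, (π (kG θ) : V →L[ℂ] V) w = Complex.exp (-((n : ℂ) * θ) * Complex.I) • w) →
        w = 0) :
    ∀ v : V, (∫ x : ↥SO21c, f x • ((π x : V →L[ℂ] V) v) ∂μ) = 0 :=
  integral_bi_equivariant_eq_zero_of_no_isotypic_vector_general n μ V π f hf hw
end
end

section
/- (Separation of K×K-orbits by τ_n-bi-equivariant functions.) Let n ∈ ℤ and let x, y ∈ G be such that their K×K-orbits are disjoint, i.e., y ∉ KxK = {k_{θ₁} · x · k_{θ₂} : θ₁, θ₂ ∈ ℝ}. Then there exists a continuous, compactly supported function F : G → ℂ satisfying F(k_{θ₁} · g · k_{θ₂}) = e^{in(θ₁+θ₂)} F(g) for all g ∈ G and all θ₁, θ₂ ∈ ℝ, such that F(x) ≠ F(y). -/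
open Matrix MeasureTheory

noncomputable section

/-!
Write `χ(θ) = e^{inθ}`. If `k_a x k_b = x`, then `a + b ∈ 2πℤ`: either `k_a` fixes the nonzero
horizontal part of the third column of `x`, or `k_b` that of its third row, or `x` is a block
rotation commuting with `K` (here `x₂₂ > 0` on the identity component is used). So `χ(a)χ(b) = 1`
on the stabiliser of `x`, and a bump `ψ ≥ 0` with `ψ(x) = 1` can be chosen vanishing on `KyK` and
on the compact set of points `k_a x k_b` with `Re χ(-a)χ(-b) ≤ 0`. The twisted average
`F(g) = ∬ χ(θ₁)χ(θ₂) ψ(k_{-θ₁} g k_{-θ₂})` over `[0, 2π]²` is then bi-equivariant, compactly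
supported, vanishes at `y`, and has `Re F(x) > 0`.
-/

open Real
open scoped Pointwise

lemma Function.Periodic.comp_neg {α β : Type*} [AddCommGroup α] {f : α → β} {c : α}
    (h : Function.Periodic f c) : Function.Periodic (fun x => f (-x)) c := fun x => by
  simp only [neg_add, ← sub_eq_add_neg, h.sub_eq]

/-- `2π` times the `(-n)`-th Fourier coefficient of `q`. -/
def twistedIntegral (n : ℤ) (q : ℝ → ℂ) : ℂ :=
  ∫ θ in (0 : ℝ)..2 * π, Complex.exp (n * θ * Complex.I) * q θ

section TwistedIntegral

variable (n : ℤ) {q : ℝ → ℂ}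

lemma exp_int_mul_mul_exp_int_mul (a b : ℝ) :
    Complex.exp (n * a * Complex.I) * Complex.exp (n * b * Complex.I) =
      Complex.exp (n * (a + b) * Complex.I) := by
  rw [← Complex.exp_add]; ring_nf

lemma periodic_exp_int_mul :
    Function.Periodic (fun θ : ℝ => Complex.exp (n * θ * Complex.I)) (2 * π) := fun θ => by
  simp only [Complex.ofReal_add, Complex.ofReal_mul, Complex.ofReal_ofNat]
  rw [show (n : ℂ) * (θ + 2 * π) * Complex.I = n * θ * Complex.I + n * (2 * π * Complex.I) by ring,
    Complex.exp_add, Complex.exp_int_mul_two_pi_mul_I, mul_one]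

lemma twistedIntegral_const_mul (c : ℂ) :
    twistedIntegral n (fun θ => c * q θ) = c * twistedIntegral n q := by
  simp only [twistedIntegral, ← intervalIntegral.integral_const_mul, mul_left_comm c]

lemma twistedIntegral_comp_sub (hq : Function.Periodic q (2 * π)) (b : ℝ) :
    twistedIntegral n (fun θ => q (θ - b)) =
      Complex.exp (n * b * Complex.I) * twistedIntegral n q := by
  set H : ℝ → ℂ := fun θ => Complex.exp (n * θ * Complex.I) * q θ
  have hH : Function.Periodic H (2 * π) := (periodic_exp_int_mul n).mul hq
  calc twistedIntegral n (fun θ => q (θ - b))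
      = ∫ θ in (0 : ℝ)..2 * π, Complex.exp (n * b * Complex.I) * H (θ - b) := by
        refine intervalIntegral.integral_congr fun θ _ => ?_
        simp only [H, ← mul_assoc, exp_int_mul_mul_exp_int_mul, ← Complex.ofReal_add,
          add_sub_cancel]
    _ = Complex.exp (n * b * Complex.I) * twistedIntegral n q := by
        rw [intervalIntegral.integral_const_mul, intervalIntegral.integral_comp_sub_right H b,
          zero_sub, sub_eq_neg_add, hH.intervalIntegral_add_eq (-b) 0, zero_add]
        rfl

lemma continuous_twistedIntegral {X : Type*} [TopologicalSpace X] {q : X → ℝ → ℂ}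
    (hq : Continuous (Function.uncurry q)) : Continuous fun x => twistedIntegral n (q x) :=
  intervalIntegral.continuous_parametric_intervalIntegral_of_continuous' (by fun_prop) 0 (2 * π)

lemma re_twistedIntegral (hq : Continuous q) :
    (twistedIntegral n q).re =
      ∫ θ in (0 : ℝ)..2 * π, (Complex.exp (n * θ * Complex.I) * q θ).re :=
  (Complex.reCLM.intervalIntegral_comp_comm
    ((by fun_prop : Continuous _).intervalIntegrable _ _)).symm

lemma twistedIntegral_re_nonneg (hq : Continuous q)
    (h : ∀ θ : ℝ, 0 ≤ (Complex.exp (n * θ * Complex.I) * q θ).re) :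
    0 ≤ (twistedIntegral n q).re := by
  rw [re_twistedIntegral n hq]
  exact intervalIntegral.integral_nonneg two_pi_pos.le fun θ _ => h θ

lemma twistedIntegral_re_pos (hq : Continuous q)
    (h : ∀ θ : ℝ, 0 ≤ (Complex.exp (n * θ * Complex.I) * q θ).re) (h₀ : 0 < (q 0).re) :
    0 < (twistedIntegral n q).re := by
  rw [re_twistedIntegral n hq]
  exact intervalIntegral.integral_pos two_pi_pos (by fun_prop) (fun θ _ => h θ)
    ⟨0, ⟨le_rfl, two_pi_pos.le⟩, by simpa using h₀⟩

end TwistedIntegral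

def biTwistedAverage {G : Type*} [Group G] (k : AddChar ℝ G) (n : ℤ) (ψ : G → ℂ) (g : G) : ℂ :=
  twistedIntegral n fun θ₁ => twistedIntegral n fun θ₂ => ψ (k (-θ₁) * g * k (-θ₂))

section BiTwistedAverage

variable {G : Type*} [Group G] {k : AddChar ℝ G} (n : ℤ) {ψ : G → ℂ}

lemma biTwistedAverage_mul_mul (hper : Function.Periodic k (2 * π)) (g : G) (a b : ℝ) :
    biTwistedAverage k n ψ (k a * g * k b) =
      Complex.exp (n * (a + b) * Complex.I) * biTwistedAverage k n ψ g := by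
  have harg : ∀ θ₁ θ₂, k (-θ₁) * (k a * g * k b) * k (-θ₂) =
      k (-(θ₁ - a)) * g * k (-(θ₂ - b)) := fun θ₁ θ₂ => by
    rw [show -(θ₁ - a) = -θ₁ + a by ring, show -(θ₂ - b) = b + -θ₂ by ring,
      AddChar.map_add_eq_mul, AddChar.map_add_eq_mul]
    group
  calc biTwistedAverage k n ψ (k a * g * k b)
      = twistedIntegral n fun θ₁ => twistedIntegral n fun θ₂ =>
          ψ (k (-(θ₁ - a)) * g * k (-(θ₂ - b))) := by
        simp only [biTwistedAverage, harg]
    _ = twistedIntegral n fun θ₁ => Complex.exp (n * b * Complex.I) *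
          twistedIntegral n fun θ₂ => ψ (k (-(θ₁ - a)) * g * k (-θ₂)) := by
        congr 1; funext θ₁
        exact twistedIntegral_comp_sub n (q := fun θ₂ => ψ (k (-(θ₁ - a)) * g * k (-θ₂)))
          (fun θ => by simp only [hper.comp_neg θ]) b
    _ = Complex.exp (n * (a + b) * Complex.I) * biTwistedAverage k n ψ g := by
        rw [twistedIntegral_const_mul, twistedIntegral_comp_sub n
          (q := fun θ₁ => twistedIntegral n fun θ₂ => ψ (k (-θ₁) * g * k (-θ₂)))
          (fun θ => by simp only [hper.comp_neg θ]) a, ← mul_assoc, mul_comm (Complex.exp _),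
          exp_int_mul_mul_exp_int_mul]
        rfl

lemma biTwistedAverage_eq_zero {g : G} (h : ∀ θ₁ θ₂, ψ (k θ₁ * g * k θ₂) = 0) :
    biTwistedAverage k n ψ g = 0 := by
  simp [biTwistedAverage, twistedIntegral, h]

variable [TopologicalSpace G] [IsTopologicalGroup G]

lemma continuous_biTwistedAverage (hk : Continuous k) (hψ : Continuous ψ) :
    Continuous (biTwistedAverage k n ψ) :=
  continuous_twistedIntegral n (q := fun g θ₁ => twistedIntegral n fun θ₂ =>
      ψ (k (-θ₁) * g * k (-θ₂)))
    (continuous_twistedIntegral n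
      (q := fun (p : G × ℝ) θ₂ => ψ (k (-p.2) * p.1 * k (-θ₂))) (by fun_prop))

lemma hasCompactSupport_biTwistedAverage (hk : Continuous k)
    (hper : Function.Periodic k (2 * π)) (hψ : HasCompactSupport ψ) :
    HasCompactSupport (biTwistedAverage k n ψ) := by
  have hK : IsCompact (Set.range k) := hper.compact_of_continuous two_pi_pos.ne' hk
  refine HasCompactSupport.intro ((hK.mul hψ).mul hK) fun g hg => ?_
  refine biTwistedAverage_eq_zero n fun θ₁ θ₂ =>
    image_eq_zero_of_notMem_tsupport fun hmem => hg ?_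
  refine ⟨_, ⟨k (-θ₁), ⟨_, rfl⟩, _, hmem, rfl⟩, k (-θ₂), ⟨_, rfl⟩, ?_⟩
  simp only [AddChar.map_neg_eq_inv]
  group

lemma biTwistedAverage_re_pos (hk : Continuous k) (hψ : Continuous ψ) {g : G}
    (h : ∀ θ₁ θ₂ : ℝ,
      0 ≤ (Complex.exp (n * (θ₁ + θ₂) * Complex.I) * ψ (k (-θ₁) * g * k (-θ₂))).re)
    (hg : 0 < (ψ g).re) : 0 < (biTwistedAverage k n ψ g).re := by
  refine twistedIntegral_re_pos n (continuous_twistedIntegral n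
    (q := fun θ₁ θ₂ => ψ (k (-θ₁) * g * k (-θ₂))) (by fun_prop)) (fun θ₁ => ?_) ?_
  · rw [← twistedIntegral_const_mul]
    refine twistedIntegral_re_nonneg n (by fun_prop) fun θ₂ => ?_
    rw [← mul_assoc, mul_comm (Complex.exp _), exp_int_mul_mul_exp_int_mul]
    exact h θ₁ θ₂
  · simp only [neg_zero, AddChar.map_zero_eq_one, one_mul]
    refine twistedIntegral_re_pos n (by fun_prop) (fun θ₂ => by simpa using h 0 θ₂) ?_
    simpa using hg

end BiTwistedAverage

section Separation

variable {G : Type*} [Group G] [TopologicalSpace G] [IsTopologicalGroup G] [T2Space G]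
  [LocallyCompactSpace G] {k : AddChar ℝ G} (n : ℤ)

lemma exists_bump_of_stabilizer (hk : Continuous k) (hper : Function.Periodic k (2 * π))
    {x y : G} (hxy : ∀ θ₁ θ₂, y ≠ k θ₁ * x * k θ₂)
    (hstab : ∀ θ₁ θ₂, k θ₁ * x * k θ₂ = x → Complex.exp (n * (θ₁ + θ₂) * Complex.I) = 1) :
    ∃ ψ : C(G, ℝ), HasCompactSupport ψ ∧ ψ x = 1 ∧ (∀ g, 0 ≤ ψ g) ∧
      (∀ θ₁ θ₂, ψ (k θ₁ * y * k θ₂) = 0) ∧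
      ∀ θ₁ θ₂, ψ (k (-θ₁) * x * k (-θ₂)) ≠ 0 →
        0 < (Complex.exp (n * (θ₁ + θ₂) * Complex.I)).re := by
  -- Pairing `k (-θ)` with `e^{inθ}` makes `D` the image of a compact set, although it is cut out
  -- by a condition on the angles.
  set R := Set.range fun θ : ℝ => (k (-θ), Complex.exp (n * θ * Complex.I))
  have hR : IsCompact R := by
    exact Function.Periodic.compact_of_continuous
      (fun θ => Prod.ext (hper.comp_neg θ) (periodic_exp_int_mul n θ)) two_pi_pos.ne' (by fun_prop)
  set D := (fun p : (G × ℂ) × (G × ℂ) => p.1.1 * x * p.2.1) ''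
    (R ×ˢ R ∩ {p | (p.1.2 * p.2.2).re ≤ 0})
  have hD : IsCompact D :=
    ((hR.prod hR).inter_right (isClosed_le (by fun_prop) continuous_const)).image (by fun_prop)
  have hK : IsCompact (Set.range k) := hper.compact_of_continuous two_pi_pos.ne' hk
  have hO : IsCompact (Set.range k * {y} * Set.range k) := (hK.mul isCompact_singleton).mul hK
  have hxD : x ∉ D := by
    rintro ⟨⟨⟨u, z⟩, ⟨v, w⟩⟩, ⟨⟨⟨θ₁, h₁⟩, ⟨θ₂, h₂⟩⟩, hre⟩, hx⟩
    obtain ⟨rfl, rfl⟩ := Prod.mk.inj h₁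
    obtain ⟨rfl, rfl⟩ := Prod.mk.inj h₂
    have h1 := hstab (-θ₁) (-θ₂) hx
    simp only [Set.mem_ofPred_eq, exp_int_mul_mul_exp_int_mul] at hre
    rw [show (n : ℂ) * (θ₁ + θ₂) * Complex.I = -(n * ((-θ₁ : ℝ) + (-θ₂ : ℝ)) * Complex.I) by
      push_cast; ring, Complex.exp_neg, h1] at hre
    norm_num at hre
  have hxO : x ∉ Set.range k * {y} * Set.range k := by
    rintro ⟨_, ⟨_, ⟨a, rfl⟩, _, rfl, rfl⟩, _, ⟨b, rfl⟩, hx⟩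
    refine hxy (-a) (-b) ?_
    rw [← hx, AddChar.map_neg_eq_inv, AddChar.map_neg_eq_inv]
    group
  obtain ⟨ψ, hψx, hψ0, hψc, hψI⟩ := exists_continuous_one_zero_of_isCompact isCompact_singleton
    (hD.isClosed.union hO.isClosed) (Set.disjoint_singleton_left.mpr (by
      rintro (h | h)
      exacts [hxD h, hxO h]))
  refine ⟨ψ, hψc, hψx rfl, fun g => (hψI g).1, fun θ₁ θ₂ => hψ0 (Or.inr ?_),
    fun θ₁ θ₂ hne => ?_⟩
  · exact ⟨_, ⟨k θ₁, ⟨θ₁, rfl⟩, y, rfl, rfl⟩, k θ₂, ⟨θ₂, rfl⟩, rfl⟩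
  · by_contra hle
    refine hne (hψ0 (Or.inl ⟨((k (-θ₁), _), (k (-θ₂), _)),
      ⟨⟨⟨θ₁, rfl⟩, ⟨θ₂, rfl⟩⟩, ?_⟩, rfl⟩))
    simpa only [Set.mem_ofPred_eq, exp_int_mul_mul_exp_int_mul, not_lt] using hle

theorem exists_biEquivariant_separating (hk : Continuous k) (hper : Function.Periodic k (2 * π))
    {x y : G} (hxy : ∀ θ₁ θ₂, y ≠ k θ₁ * x * k θ₂)
    (hstab : ∀ θ₁ θ₂, k θ₁ * x * k θ₂ = x → Complex.exp (n * (θ₁ + θ₂) * Complex.I) = 1) :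
    ∃ F : G → ℂ, Continuous F ∧ HasCompactSupport F ∧
      (∀ g θ₁ θ₂, F (k θ₁ * g * k θ₂) = Complex.exp (n * (θ₁ + θ₂) * Complex.I) * F g) ∧
      F x ≠ F y := by
  obtain ⟨ψ, hψc, hψx, hψ_nonneg, hψy, hψ_pos⟩ := exists_bump_of_stabilizer n hk hper hxy hstab
  set F := biTwistedAverage k n fun g => (ψ g : ℂ)
  have hFy : F y = 0 := biTwistedAverage_eq_zero n fun θ₁ θ₂ => by simp [hψy]
  have hFx : 0 < (F x).re := by
    refine biTwistedAverage_re_pos n hk (by fun_prop) (fun θ₁ θ₂ => ?_) (by simp [hψx])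
    rw [Complex.re_mul_ofReal]
    by_cases h : ψ (k (-θ₁) * x * k (-θ₂)) = 0
    · simp [h]
    · exact mul_nonneg (hψ_pos θ₁ θ₂ h).le (hψ_nonneg _)
  refine ⟨F, continuous_biTwistedAverage n hk (by fun_prop),
    hasCompactSupport_biTwistedAverage n hk hper (hψc.comp_left Complex.ofReal_zero),
    biTwistedAverage_mul_mul n hper, fun h => ?_⟩
  rw [h, hFy, Complex.zero_re] at hFx
  exact hFx.false

end Separation

lemma kmat_add (a b : ℝ) : kmat (a + b) = kmat a * kmat b := by
  rw [kmat, kmat, kmat, Matrix.mul_fin_three]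
  ext i j; fin_cases i <;> fin_cases j <;> simp [Real.cos_add, Real.sin_add] <;> ring

lemma toM_injective : Function.Injective toM :=
  fun _ _ h => Subtype.ext (Subtype.ext (Units.ext h))

lemma toM_kG (θ : ℝ) : toM (kG θ) = kmat θ := rfl

lemma kG_add (a b : ℝ) : kG (a + b) = kG a * kG b := toM_injective (kmat_add a b)

def kChar : AddChar ℝ ↥SO21c where
  toFun := kG
  map_zero_eq_one' := Subtype.ext kS_zero
  map_add_eq_mul' := kG_add

lemma continuous_kChar : Continuous kChar := continuous_kS.subtype_mk _

lemma periodic_kChar : Function.Periodic kChar (2 * π) := fun θ =>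
  toM_injective (by
    simp only [kChar, AddChar.coe_mk, toM_kG, kmat, Real.cos_add_two_pi, Real.sin_add_two_pi])

instance : LocallyCompactSpace M3 := inferInstanceAs (LocallyCompactSpace (Fin 3 → Fin 3 → ℝ))

lemma isClosed_SO21 : IsClosed (SO21 : Set (GL (Fin 3) ℝ)) :=
  (isClosed_eq (by fun_prop) continuous_const).inter (isClosed_eq (by fun_prop) continuous_const)

instance : LocallyCompactSpace ↥SO21 := isClosed_SO21.locallyCompactSpace

instance : LocallyCompactSpace ↥SO21c := isClosed_connectedComponent.locallyCompactSpace

lemma kG_eq_one_iff {θ : ℝ} : kG θ = 1 ↔ cos θ = 1 ∧ sin θ = 0 := by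
  rw [← toM_injective.eq_iff, toM_kG, show toM 1 = 1 from rfl, ← Matrix.ext_iff]
  simp [kmat, Fin.forall_fin_succ, Matrix.one_apply]
  tauto

lemma kG_eq_one_of_fixes {θ u v : ℝ} (h₁ : cos θ * u - sin θ * v = u)
    (h₂ : sin θ * u + cos θ * v = v) (huv : u ≠ 0 ∨ v ≠ 0) : kG θ = 1 := by
  have key : ((cos θ - 1) ^ 2 + sin θ ^ 2) * (u ^ 2 + v ^ 2) = 0 := by
    linear_combination ((cos θ - 1) * u - sin θ * v) * h₁ +
      (sin θ * u + (cos θ - 1) * v) * h₂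
  have huv' : u ^ 2 + v ^ 2 ≠ 0 := by
    rcases huv with h | h <;> positivity
  have hcs := (mul_eq_zero.1 key).resolve_right huv'
  refine kG_eq_one_iff.2 ⟨?_, ?_⟩ <;> nlinarith [sq_nonneg (cos θ - 1), sq_nonneg (sin θ)]

lemma sq_add_sq_sub_sq_of_transpose_mul_Jmat {M : M3} (h : Mᵀ * Jmat * M = Jmat) (i : Fin 3) :
    M 0 i ^ 2 + M 1 i ^ 2 - M 2 i ^ 2 = Jmat i i := by
  rw [← h]
  simp [Matrix.mul_apply, Fin.sum_univ_three, Jmat]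
  ring

-- On `SO(2,1)`, `g₂₂² = 1 + g₀₂² + g₁₂²`, so `{g₂₂ > 0}` is clopen.
lemma toM_two_two_pos (g : ↥SO21c) : 0 < toM g 2 2 := by
  let f : ↥SO21 → ℝ := fun h => ((h : GL (Fin 3) ℝ) : M3) 2 2
  have hf : Continuous f := by fun_prop
  have hf0 : ∀ h, f h ≠ 0 := fun h h0 => by
    have := sq_add_sq_sub_sq_of_transpose_mul_Jmat h.2.2 2
    simp only [f] at h0
    simp [Jmat, h0] at this
    nlinarith
  have hpos : IsClopen {h | 0 < f h} := by
    refine ⟨?_, isOpen_lt continuous_const hf⟩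
    rw [show {h | 0 < f h} = {h | 0 ≤ f h} from Set.ext fun h => ((hf0 h).symm.le_iff_lt).symm]
    exact isClosed_le continuous_const hf
  exact hpos.connectedComponent_subset (by simp [f]) g.2

lemma toM_block_eq_rotation {g : ↥SO21c} (h02 : toM g 0 2 = 0) (h12 : toM g 1 2 = 0)
    (h20 : toM g 2 0 = 0) (h21 : toM g 2 1 = 0) :
    toM g 1 1 = toM g 0 0 ∧ toM g 0 1 = -toM g 1 0 := by
  have f0 := sq_add_sq_sub_sq_of_transpose_mul_Jmat (M := toM g) g.1.2.2 0
  have f1 := sq_add_sq_sub_sq_of_transpose_mul_Jmat (M := toM g) g.1.2.2 1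
  have f2 := sq_add_sq_sub_sq_of_transpose_mul_Jmat (M := toM g) g.1.2.2 2
  have hdet : (toM g).det = 1 := g.1.2.1
  simp [Jmat, h02, h12, h20, h21] at f0 f1 f2
  rw [Matrix.det_fin_three, h02, h12, h20, h21] at hdet
  have h22 : toM g 2 2 = 1 := f2.resolve_right fun h => by linarith [toM_two_two_pos g]
  have hz : (toM g 1 1 - toM g 0 0) ^ 2 + (toM g 0 1 + toM g 1 0) ^ 2 = 0 := by
    rw [h22] at hdet
    linear_combination f0 + f1 - 2 * hdet
  constructor <;>
    nlinarith [sq_nonneg (toM g 1 1 - toM g 0 0), sq_nonneg (toM g 0 1 + toM g 1 0)]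

lemma kmat_mul_comm_of_rotation_block {A : M3} (h02 : A 0 2 = 0) (h12 : A 1 2 = 0)
    (h20 : A 2 0 = 0) (h21 : A 2 1 = 0) (h11 : A 1 1 = A 0 0) (h01 : A 0 1 = -A 1 0) (θ : ℝ) :
    kmat θ * A = A * kmat θ := by
  ext i j
  fin_cases i <;> fin_cases j <;>
    simp [Matrix.mul_apply, Fin.sum_univ_three, kmat, h02, h12, h20, h21, h11, h01] <;> ring

lemma rotations_fix_of_kmat_mul_mul_eq {A : M3} {a b : ℝ} (h : kmat a * A * kmat b = A) :
    (cos a * A 0 2 - sin a * A 1 2 = A 0 2 ∧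
      sin a * A 0 2 + cos a * A 1 2 = A 1 2) ∧
    (cos b * A 2 1 - sin b * A 2 0 = A 2 1 ∧
      sin b * A 2 1 + cos b * A 2 0 = A 2 0) := by
  have E : ∀ i j, (kmat a * A * kmat b) i j = A i j := fun i j => by rw [h]
  have e02 := E 0 2
  have e12 := E 1 2
  have e20 := E 2 0
  have e21 := E 2 1
  simp only [Matrix.mul_apply, Fin.sum_univ_three, kmat] at e02 e12 e20 e21
  simp [Matrix.vecHead, Matrix.vecTail, Matrix.cons_val_two] at e02 e12 e20 e21
  refine ⟨⟨?_, ?_⟩, ?_, ?_⟩ <;> linarith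

lemma kG_add_eq_one_of_mul_mul_eq {g : ↥SO21c} {a b : ℝ} (h : kG a * g * kG b = g) :
    kG (a + b) = 1 := by
  obtain ⟨⟨ha₁, ha₂⟩, hb₁, hb₂⟩ := rotations_fix_of_kmat_mul_mul_eq (congrArg toM h)
  by_cases hcol : toM g 0 2 ≠ 0 ∨ toM g 1 2 ≠ 0
  · have ha : kG a = 1 := kG_eq_one_of_fixes ha₁ ha₂ hcol
    rw [ha, one_mul, mul_eq_left] at h
    rw [kG_add, ha, h, one_mul]
  by_cases hrow : toM g 2 1 ≠ 0 ∨ toM g 2 0 ≠ 0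
  · have hb : kG b = 1 := kG_eq_one_of_fixes hb₁ hb₂ hrow
    rw [hb, mul_one, mul_eq_right] at h
    rw [kG_add, h, hb, one_mul]
  push Not at hcol hrow
  obtain ⟨h11, h01⟩ := toM_block_eq_rotation hcol.1 hcol.2 hrow.2 hrow.1
  have hcomm : kG b * g = g * kG b :=
    toM_injective (kmat_mul_comm_of_rotation_block hcol.1 hcol.2 hrow.2 hrow.1 h11 h01 b)
  rwa [mul_assoc, ← hcomm, ← mul_assoc, ← kG_add, mul_eq_right] at h

/-- Separation of `K×K`-orbits by `τ_n`-bi-equivariant functions: if `x, y ∈ G = SO(2,1)°`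
have disjoint `K×K`-orbits (i.e. `y ∉ KxK`), then there is a continuous, compactly
supported, `τ_n`-bi-equivariant function `F : G → ℂ` with `F(x) ≠ F(y)`. -/
theorem bi_equivariant_separates_KxK_orbits
    (n : ℤ) (x y : ↥SO21c)
    (hxy : ∀ θ₁ θ₂ : ℝ, y ≠ kG θ₁ * x * kG θ₂) :
    ∃ F : ↥SO21c → ℂ, Continuous F ∧ HasCompactSupport F ∧
      (∀ (g : ↥SO21c) (θ₁ θ₂ : ℝ),
        F (kG θ₁ * g * kG θ₂) = Complex.exp ((n : ℂ) * (θ₁ + θ₂) * Complex.I) * F g) ∧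
      F x ≠ F y := by
  have hstab : ∀ θ₁ θ₂ : ℝ, kG θ₁ * x * kG θ₂ = x →
      Complex.exp (n * (θ₁ + θ₂) * Complex.I) = 1 := fun θ₁ θ₂ h => by
    obtain ⟨m, hm⟩ :=
      (Real.cos_eq_one_iff _).1 (kG_eq_one_iff.1 (kG_add_eq_one_of_mul_mul_eq h)).1
    refine Complex.exp_eq_one_iff.2 ⟨n * m, ?_⟩
    rw [← Complex.ofReal_add, ← hm]
    push_cast
    ring
  exact exists_biEquivariant_separating (k := kChar) n continuous_kChar periodic_kChar hxy hstab
end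
end
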